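/- Let R be a G-graded commutative ring and I, J graded ideals of R. Then GX^{qp.R}(I) = GX^{qp.R}(J) if and only if Gr(I) = Gr(J). -/

import Mathlib

/-- The graded radical `Gr(I)` of an ideal `I` of a `G`-graded commutative ring:
the set of all `r` such that every homogeneous component of `r` has some positive
power in `I`. -/
def gradedRadical {G R : Type*} [AddGroup G] [DecidableEq G] [CommRing R]
    (𝒜 : G → AddSubgroup R) [GradedRing 𝒜] (I : Ideal R) : Set R :=
  {r : R | ∀ g : G, ∃ n : ℕ, 0 < n ∧ (DirectSum.decompose 𝒜 r g : R) ^ n ∈ I}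

/-- An ideal is graded if it contains the homogeneous components of all its elements. -/
def IsGradedIdeal {G R : Type*} [AddGroup G] [DecidableEq G] [CommRing R]
    (𝒜 : G → AddSubgroup R) [GradedRing 𝒜] (I : Ideal R) : Prop :=
  ∀ (g : G) ⦃r : R⦄, r ∈ I → (DirectSum.decompose 𝒜 r g : R) ∈ I

/-- A graded prime ideal: a proper graded ideal such that `r * s ∈ P` for homogeneous
`r, s` implies `r ∈ P` or `s ∈ P`. -/
def IsGradedPrimeIdeal {G R : Type*} [AddGroup G] [DecidableEq G] [CommRing R]
    (𝒜 : G → AddSubgroup R) [GradedRing 𝒜] (P : Ideal R) : Prop :=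
  P ≠ ⊤ ∧ IsGradedIdeal 𝒜 P ∧
    ∀ ⦃r s : R⦄, SetLike.IsHomogeneousElem 𝒜 r → SetLike.IsHomogeneousElem 𝒜 s →
      r * s ∈ P → r ∈ P ∨ s ∈ P

/-- A graded quasi-primary ideal: a proper graded ideal such that `a * b ∈ q` for
homogeneous `a, b` implies `a ∈ Gr(q)` or `b ∈ Gr(q)`. -/
def IsGradedQuasiPrimaryIdeal {G R : Type*} [AddGroup G] [DecidableEq G] [CommRing R]
    (𝒜 : G → AddSubgroup R) [GradedRing 𝒜] (q : Ideal R) : Prop :=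
  q ≠ ⊤ ∧ IsGradedIdeal 𝒜 q ∧
    ∀ ⦃a b : R⦄, SetLike.IsHomogeneousElem 𝒜 a → SetLike.IsHomogeneousElem 𝒜 b →
      a * b ∈ q → a ∈ gradedRadical 𝒜 q ∨ b ∈ gradedRadical 𝒜 q

/-- The graded quasi-primary spectrum of `R`: the set of all graded quasi-primary ideals. -/
def qpSpecR {G R : Type*} [AddGroup G] [DecidableEq G] [CommRing R]
    (𝒜 : G → AddSubgroup R) [GradedRing 𝒜] : Set (Ideal R) :=
  {q : Ideal R | IsGradedQuasiPrimaryIdeal 𝒜 q}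

/-- The variety `qp-V_R^g(I) = { q ∈ q.Spec_g(R) : Gr(q) ⊇ I }`. -/
def qpVR {G R : Type*} [AddGroup G] [DecidableEq G] [CommRing R]
    (𝒜 : G → AddSubgroup R) [GradedRing 𝒜] (I : Ideal R) : Set (qpSpecR 𝒜) :=
  {q : qpSpecR 𝒜 | (I : Set R) ⊆ gradedRadical 𝒜 q.1}

/-- The quasi-Zariski topology on `q.Spec_g(R)`, generated by the complements of the
varieties of graded ideals. -/
def qpZariskiR {G R : Type*} [AddGroup G] [DecidableEq G] [CommRing R]
    (𝒜 : G → AddSubgroup R) [GradedRing 𝒜] : TopologicalSpace (qpSpecR 𝒜) :=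
  TopologicalSpace.generateFrom
    {U : Set (qpSpecR 𝒜) | ∃ I : Ideal R, IsGradedIdeal 𝒜 I ∧ U = (qpVR 𝒜 I)ᶜ}

/-! `Gr(J)` is the intersection of the graded primes containing `J`: if a homogeneous `x` has no
positive power in `J`, some prime `Q ⊇ J` avoids the powers of `x`, and the homogeneous core of `Q`
is a graded prime containing `J` but not `x`. A graded prime `P` is quasi-primary with `Gr(P) = P`,
so it lies in `qp-V(I)` exactly when `I ⊆ P`. Hence `qp-V(J) ⊆ qp-V(I)` forces `Gr(I) ⊆ Gr(J)`;
the converse holds because `I ⊆ Gr(q)` iff `Gr(I) ⊆ Gr(q)`. -/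

open SetLike DirectSum

section GradedRadical

variable {G R : Type*} [AddGroup G] [DecidableEq G] [CommRing R]
  {𝒜 : G → AddSubgroup R} [GradedRing 𝒜] {I J P : Ideal R}

theorem mem_gradedRadical_iff_of_isHomogeneousElem {x : R} (hx : IsHomogeneousElem 𝒜 x) :
    x ∈ gradedRadical 𝒜 I ↔ ∃ n, 0 < n ∧ x ^ n ∈ I := by
  obtain ⟨d, hd⟩ := hx
  refine ⟨fun h => by simpa only [decompose_of_mem_same 𝒜 hd] using h d, ?_⟩
  rintro ⟨n, hn, hxn⟩ g
  obtain rfl | hgd := eq_or_ne g d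
  · exact ⟨n, hn, by rwa [decompose_of_mem_same 𝒜 hd]⟩
  · exact ⟨1, one_pos, by simp [decompose_of_mem_ne 𝒜 hd hgd.symm]⟩

theorem subset_gradedRadical (hI : IsGradedIdeal 𝒜 I) : (I : Set R) ⊆ gradedRadical 𝒜 I :=
  fun _ hr g => ⟨1, one_pos, by simpa using hI g hr⟩

theorem gradedRadical_subset_gradedRadical_iff (hI : IsGradedIdeal 𝒜 I) :
    gradedRadical 𝒜 I ⊆ gradedRadical 𝒜 J ↔ (I : Set R) ⊆ gradedRadical 𝒜 J := by
  refine ⟨(subset_gradedRadical hI).trans, fun h r hr g => ?_⟩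
  obtain ⟨n, hn, hxn⟩ := hr g
  have hx : IsHomogeneousElem 𝒜 (decompose 𝒜 r g : R) := isHomogeneousElem_coe _
  obtain ⟨m, hm, hxnm⟩ := (mem_gradedRadical_iff_of_isHomogeneousElem
    ((homogeneousSubmonoid 𝒜).pow_mem hx n)).1 (h hxn)
  exact ⟨n * m, Nat.mul_pos hn hm, by rwa [pow_mul]⟩

theorem IsGradedPrimeIdeal.mem_of_pow_mem (hP : IsGradedPrimeIdeal 𝒜 P) {x : R}
    (hx : IsHomogeneousElem 𝒜 x) {n : ℕ} (hxn : x ^ n ∈ P) : x ∈ P := by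
  induction n with
  | zero => exact absurd ((Ideal.eq_top_iff_one P).2 (by simpa using hxn)) hP.1
  | succ n ih =>
    rw [pow_succ] at hxn
    exact (hP.2.2 ((homogeneousSubmonoid 𝒜).pow_mem hx n) hx hxn).elim ih id

theorem IsGradedPrimeIdeal.gradedRadical_eq (hP : IsGradedPrimeIdeal 𝒜 P) :
    gradedRadical 𝒜 P = P := by
  refine (subset_gradedRadical hP.2.1).antisymm' fun r hr => ?_
  refine (Ideal.IsHomogeneous.mem_iff 𝒜 hP.2.1).2 fun g => ?_
  obtain ⟨n, -, hxn⟩ := hr g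
  exact hP.mem_of_pow_mem (isHomogeneousElem_coe _) hxn

theorem IsGradedPrimeIdeal.isGradedQuasiPrimaryIdeal (hP : IsGradedPrimeIdeal 𝒜 P) :
    IsGradedQuasiPrimaryIdeal 𝒜 P :=
  ⟨hP.1, hP.2.1, fun _ _ ha hb hab =>
    (hP.2.2 ha hb hab).imp (subset_gradedRadical hP.2.1 ·) (subset_gradedRadical hP.2.1 ·)⟩

theorem Ideal.IsPrime.isGradedPrimeIdeal_homogeneousCore {Q : Ideal R} (hQ : Q.IsPrime) :
    IsGradedPrimeIdeal 𝒜 (Q.homogeneousCore 𝒜).toIdeal :=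
  ⟨ne_top_of_le_ne_top hQ.ne_top (Q.toIdeal_homogeneousCore_le 𝒜),
    (Q.homogeneousCore 𝒜).isHomogeneous, fun _ _ ha hb hab =>
    (hQ.mem_or_mem (Q.toIdeal_homogeneousCore_le 𝒜 hab)).imp
      (Ideal.mem_homogeneousCore_of_homogeneous_of_mem ha)
      (Ideal.mem_homogeneousCore_of_homogeneous_of_mem hb)⟩

theorem exists_isGradedPrimeIdeal_le_notMem (hJ : IsGradedIdeal 𝒜 J) {x : R}
    (hx : IsHomogeneousElem 𝒜 x) (hxJ : x ∉ gradedRadical 𝒜 J) :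
    ∃ P, IsGradedPrimeIdeal 𝒜 P ∧ J ≤ P ∧ x ∉ P := by
  have hdisj : Disjoint (J : Set R) (Submonoid.powers x) := by
    refine Set.disjoint_right.2 ?_
    rintro _ ⟨n, rfl⟩ hxn
    refine hxJ ((mem_gradedRadical_iff_of_isHomogeneousElem hx).2 ?_)
    rcases n.eq_zero_or_pos with rfl | hn
    · exact ⟨1, one_pos, by simpa using J.mul_mem_left x hxn⟩
    · exact ⟨n, hn, hxn⟩
  obtain ⟨Q, hQ, hJQ, hQx⟩ := Ideal.exists_le_prime_disjoint J _ hdisj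
  refine ⟨_, hQ.isGradedPrimeIdeal_homogeneousCore, ?_, fun hxP => ?_⟩
  · rw [← Ideal.IsHomogeneous.toIdeal_homogeneousCore_eq_self hJ]
    exact Ideal.homogeneousCore_mono 𝒜 hJQ
  · exact Set.disjoint_left.1 hQx (Q.toIdeal_homogeneousCore_le 𝒜 hxP) (Submonoid.mem_powers x)

theorem gradedRadical_eq_setOf_isGradedPrimeIdeal (hJ : IsGradedIdeal 𝒜 J) :
    gradedRadical 𝒜 J = {r | ∀ P, IsGradedPrimeIdeal 𝒜 P → J ≤ P → r ∈ P} := by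
  ext r
  refine ⟨fun hr P hP hJP => ?_, fun hr g => ?_⟩
  · rw [← SetLike.mem_coe, ← hP.gradedRadical_eq]
    exact (gradedRadical_subset_gradedRadical_iff hJ).2
      ((SetLike.coe_subset_coe.2 hJP).trans (subset_gradedRadical hP.2.1)) hr
  · have hx : IsHomogeneousElem 𝒜 (decompose 𝒜 r g : R) := isHomogeneousElem_coe _
    by_contra hxJ
    obtain ⟨P, hP, hJP, hxP⟩ := exists_isGradedPrimeIdeal_le_notMem hJ hx
      (hxJ ∘ (mem_gradedRadical_iff_of_isHomogeneousElem hx).1)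
    exact hxP (hP.2.1 g (hr P hP hJP))

theorem IsGradedPrimeIdeal.mk_mem_qpVR_iff (hP : IsGradedPrimeIdeal 𝒜 P) :
    (⟨P, hP.isGradedQuasiPrimaryIdeal⟩ : qpSpecR 𝒜) ∈ qpVR 𝒜 I ↔ I ≤ P := by
  rw [qpVR, Set.mem_ofPred_eq, hP.gradedRadical_eq, SetLike.coe_subset_coe]

theorem qpVR_subset_qpVR_iff (hI : IsGradedIdeal 𝒜 I) (hJ : IsGradedIdeal 𝒜 J) :
    qpVR 𝒜 J ⊆ qpVR 𝒜 I ↔ gradedRadical 𝒜 I ⊆ gradedRadical 𝒜 J := by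
  refine ⟨fun hV => ?_, fun hIJ q hq => ?_⟩
  · rw [gradedRadical_eq_setOf_isGradedPrimeIdeal hI, gradedRadical_eq_setOf_isGradedPrimeIdeal hJ]
    exact fun r hr P hP hJP =>
      hr P hP (hP.mk_mem_qpVR_iff.1 (hV (hP.mk_mem_qpVR_iff.2 hJP)))
  · exact (gradedRadical_subset_gradedRadical_iff hI).1
      (hIJ.trans ((gradedRadical_subset_gradedRadical_iff hJ).2 hq))

end GradedRadical

/-- For graded ideals `I` and `J`, `GX^{qp.R}(I) = GX^{qp.R}(J)` iff
`Gr(I) = Gr(J)`. -/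
theorem gx_eq_gx_iff_gradedRadical_eq {G R : Type*} [AddGroup G] [DecidableEq G]
    [CommRing R] (𝒜 : G → AddSubgroup R) [GradedRing 𝒜]
    (I J : Ideal R) (hI : IsGradedIdeal 𝒜 I) (hJ : IsGradedIdeal 𝒜 J) :
    (qpVR 𝒜 I)ᶜ = (qpVR 𝒜 J)ᶜ ↔ gradedRadical 𝒜 I = gradedRadical 𝒜 J := by
  rw [compl_inj_iff, Set.Subset.antisymm_iff, Set.Subset.antisymm_iff,
    qpVR_subset_qpVR_iff hJ hI, qpVR_subset_qpVR_iff hI hJ, and_comm]
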